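/- arXiv:1903.02103 — 5 statements merged into one kernel-verified Lean document; each statement's English description precedes it below -/
import Mathlib

section
/- Let (β_n) be a sequence of positive reals with n²β_n → ∞ and n β_n log log n → 0 as n → ∞. For each n, let X_{1,n}, …, X_{n,n} be independent random variables with X_{i,n} ~ χ(i β_n). Set a_n = √(2 log(n² β_n)) and b_n = a_n − log log(n² β_n)/a_n. Then for every x ≥ 0, P( max_{1 ≤ i ≤ n} X_{i,n} ≤ x/a_n + b_n ) → exp(−e^{−x}/4) as n → ∞. -/
/-!
By independence, `P(max_i X_{i,n} ≤ c)` is the product of `1 - Q(iβ/2, c²/2)`, where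
`Q(s, u) = Γ(s, u) / Γ(s)` is the regularized upper incomplete Gamma function. For shapes
`0 < s ≤ δ` with `δ → 0` and `u → ∞` one has `Q(s, u) = s · e^{-u}/u · (1 + o(1))` uniformly:
`Γ(s, u)` lies between `e^{-u}/(u+1)` and `u^{s-1} e^{-u}`, `sΓ(s) = Γ(1+s) → 1`, and
`u^s ≤ u^δ → 1` because `δ log u ≍ nβ log log n → 0`. Summing over `i`, the total tail mass is
asymptotically `(n²β/4) e^{-u}/u`, which tends to `e^{-x}/4` for `c = x/a_n + b_n`. Since every
single term tends to `0`, the product tends to `exp(-e^{-x}/4)`.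
-/

open MeasureTheory ProbabilityTheory Filter Real

/-- The chi distribution with parameter `k > 0`: the pushforward of the Gamma
distribution with shape `k/2` and rate `1/2` under `t ↦ √t`. -/
noncomputable def chiMeasure (k : ℝ) : Measure ℝ :=
  (gammaMeasure (k / 2) (1 / 2)).map Real.sqrt

open Set Topology

noncomputable def upperIncGamma (s u : ℝ) : ℝ := ∫ t in Ioi u, exp (-t) * t ^ (s - 1)

lemma integrableOn_upperIncGamma_integrand {s u : ℝ} (hs : 0 < s) (hu : 0 ≤ u) :
    IntegrableOn (fun t => exp (-t) * t ^ (s - 1)) (Ioi u) :=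
  (GammaIntegral_convergent hs).mono_set (Ioi_subset_Ioi hu)

lemma upperIncGamma_le {s u : ℝ} (hs : 0 < s) (hs1 : s ≤ 1) (hu : 0 < u) :
    upperIncGamma s u ≤ u ^ (s - 1) * exp (-u) := by
  calc upperIncGamma s u ≤ ∫ t in Ioi u, u ^ (s - 1) * exp (-t) := by
        refine setIntegral_mono_on (integrableOn_upperIncGamma_integrand hs hu.le)
          ((integrableOn_exp_neg_Ioi u).const_mul _) measurableSet_Ioi fun t ht => ?_
        rw [mul_comm]
        exact mul_le_mul_of_nonneg_right (rpow_le_rpow_of_nonpos hu (le_of_lt ht) (by linarith))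
          (exp_pos _).le
    _ = u ^ (s - 1) * exp (-u) := by rw [integral_const_mul, integral_exp_neg_Ioi]

-- On `t > u ≥ 1`: `t ^ (s - 1) ≥ 1 / t ≥ exp (-(t - u) / u) / u`, by `log (t / u) ≤ t / u - 1`.
lemma exp_neg_div_add_one_le_upperIncGamma {s u : ℝ} (hs : 0 < s) (hu : 1 ≤ u) :
    exp (-u) / (u + 1) ≤ upperIncGamma s u := by
  have hu0 : 0 < u := by linarith
  have hc : -((u + 1) / u) < 0 := by
    have : 0 < (u + 1) / u := by positivity
    linarith
  calc exp (-u) / (u + 1) = ∫ t in Ioi u, exp 1 / u * exp (-((u + 1) / u) * t) := by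
        rw [integral_const_mul, integral_exp_mul_Ioi hc,
          show -((u + 1) / u) * u = -u + -1 by field_simp; ring, exp_add, exp_neg 1]
        field_simp
    _ ≤ upperIncGamma s u := by
        refine setIntegral_mono_on ((integrableOn_exp_mul_Ioi hc u).const_mul _)
          (integrableOn_upperIncGamma_integrand hs hu0.le) measurableSet_Ioi fun t ht => ?_
        have ht : u < t := ht
        have ht0 : 0 < t := hu0.trans ht
        have hexp : t ≤ exp (t / u - 1) * u := by
          rw [← div_le_iff₀ hu0]; linarith [add_one_le_exp (t / u - 1)]
        calc exp 1 / u * exp (-((u + 1) / u) * t) = exp (-t) * (1 / (exp (t / u - 1) * u)) := by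
              rw [div_mul_eq_mul_div, ← exp_add, one_div, mul_inv, ← exp_neg, ← div_eq_mul_inv,
                mul_div_assoc', ← exp_add]
              congr 2
              field_simp
              ring
          _ ≤ exp (-t) * t ^ (s - 1) := by
              gcongr
              calc 1 / (exp (t / u - 1) * u) ≤ 1 / t := one_div_le_one_div_of_le ht0 hexp
                _ = t ^ (-1 : ℝ) := by rw [rpow_neg_one, one_div]
                _ ≤ t ^ (s - 1) := rpow_le_rpow_of_exponent_le (by linarith) (by linarith)

-- Convexity of `Γ` through the points `1/2, 1, 1 + s`, with `Γ (1/2) = √π ≤ 2`.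
lemma one_sub_two_mul_le_Gamma_one_add {s : ℝ} (hs : 0 < s) : 1 - 2 * s ≤ Gamma (1 + s) := by
  have hslope := convexOn_Gamma.slope_mono_adjacent (x := 1 / 2) (y := 1) (z := 1 + s)
    (by norm_num) (by simp; linarith) (by norm_num) (by linarith)
  have hsqrt : √π ≤ 2 := by
    rw [sqrt_le_left (by norm_num)]; linarith [pi_lt_four]
  rw [Gamma_one, Gamma_one_half_eq, add_sub_cancel_left, le_div_iff₀ hs] at hslope
  norm_num at hslope
  nlinarith

lemma Gamma_one_add_le_one {s : ℝ} (hs0 : 0 ≤ s) (hs1 : s ≤ 1) : Gamma (1 + s) ≤ 1 := by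
  have hseg : 1 + s ∈ segment ℝ (1 : ℝ) 2 := by
    rw [segment_eq_Icc (by norm_num)]; constructor <;> linarith
  simpa [Gamma_one, Gamma_two] using
    convexOn_Gamma.le_on_segment (by norm_num : (1 : ℝ) ∈ Ioi 0) (by norm_num) hseg

lemma Gamma_eq_Gamma_one_add_div {s : ℝ} (hs : 0 < s) : Gamma s = Gamma (1 + s) / s := by
  rw [add_comm, Gamma_add_one hs.ne', mul_div_cancel_left₀ _ hs.ne']

lemma upperIncGamma_div_Gamma_le {s δ u : ℝ} (hs : 0 < s) (hsδ : s ≤ δ) (hδ : δ < 1 / 2)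
    (hu : 1 ≤ u) :
    upperIncGamma s u / Gamma s ≤ s * (exp (-u) / u) * (u ^ δ / (1 - 2 * δ)) := by
  have hu0 : 0 < u := by linarith
  have hnum : upperIncGamma s u ≤ u ^ δ * (exp (-u) / u) :=
    calc upperIncGamma s u ≤ u ^ (s - 1) * exp (-u) := upperIncGamma_le hs (by linarith) hu0
      _ = u ^ s * (exp (-u) / u) := by rw [rpow_sub_one hu0.ne']; ring
      _ ≤ u ^ δ * (exp (-u) / u) := by gcongr
  have hden : 1 - 2 * δ ≤ Gamma (1 + s) := by linarith [one_sub_two_mul_le_Gamma_one_add hs]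
  calc upperIncGamma s u / Gamma s = s * upperIncGamma s u / Gamma (1 + s) := by
        rw [Gamma_eq_Gamma_one_add_div hs, div_div_eq_mul_div, mul_comm]
    _ ≤ s * (u ^ δ * (exp (-u) / u)) / (1 - 2 * δ) := by gcongr; linarith
    _ = s * (exp (-u) / u) * (u ^ δ / (1 - 2 * δ)) := by ring

lemma le_upperIncGamma_div_Gamma {s u : ℝ} (hs : 0 < s) (hs1 : s ≤ 1) (hu : 1 ≤ u) :
    s * (exp (-u) / u) * (u / (u + 1)) ≤ upperIncGamma s u / Gamma s := by
  have hu0 : 0 < u := by linarith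
  have hΓ : 0 < Gamma (1 + s) := Gamma_pos_of_pos (by linarith)
  calc s * (exp (-u) / u) * (u / (u + 1)) = s * (exp (-u) / (u + 1)) / 1 := by field_simp
    _ ≤ s * upperIncGamma s u / Gamma (1 + s) := by
        have hlow := exp_neg_div_add_one_le_upperIncGamma hs hu
        have hpos : 0 ≤ upperIncGamma s u := (by positivity : 0 ≤ exp (-u) / (u + 1)).trans hlow
        exact div_le_div₀ (by positivity) (by gcongr) hΓ (Gamma_one_add_le_one hs.le hs1)
    _ = upperIncGamma s u / Gamma s := by
        rw [Gamma_eq_Gamma_one_add_div hs, div_div_eq_mul_div, mul_comm]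

lemma gammaMeasure_Ioi_toReal {s r y : ℝ} (hs : 0 < s) (hr : 0 < r) (hy : 0 ≤ y) :
    (gammaMeasure s r (Ioi y)).toReal = upperIncGamma s (r * y) / Gamma s := by
  rw [gammaMeasure, withDensity_apply _ measurableSet_Ioi]
  change (∫⁻ t in Ioi y, ENNReal.ofReal (gammaPDFReal s r t)).toReal = _
  rw [← integral_eq_lintegral_of_nonneg_ae (ae_of_all _ (gammaPDFReal_nonneg hs hr))
    (measurable_gammaPDFReal s r).aestronglyMeasurable]
  calc ∫ t in Ioi y, gammaPDFReal s r t
      = ∫ t in Ioi y, r / Gamma s * (exp (-(r * t)) * (r * t) ^ (s - 1)) := by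
        refine setIntegral_congr_fun measurableSet_Ioi fun t ht => ?_
        have ht0 : 0 ≤ t := hy.trans (le_of_lt ht)
        rw [gammaPDFReal, if_pos ht0, mul_rpow hr.le ht0, rpow_sub_one hr.ne']
        field_simp
    _ = upperIncGamma s (r * y) / Gamma s := by
        rw [integral_const_mul,
          integral_comp_mul_left_Ioi (fun t => exp (-t) * t ^ (s - 1)) y hr, smul_eq_mul,
          upperIncGamma]
        field_simp

lemma isProbabilityMeasure_chiMeasure {k : ℝ} (hk : 0 < k) : IsProbabilityMeasure (chiMeasure k) :=
  have := isProbabilityMeasure_gammaMeasure (a := k / 2) (r := 1 / 2) (by positivity) (by norm_num)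
  Measure.isProbabilityMeasure_map continuous_sqrt.aemeasurable

lemma chiMeasure_Iic_sqrt_toReal {k u : ℝ} (hk : 0 < k) (hu : 0 ≤ u) :
    (chiMeasure k (Iic √(2 * u))).toReal = 1 - upperIncGamma (k / 2) u / Gamma (k / 2) := by
  have := isProbabilityMeasure_gammaMeasure (a := k / 2) (r := 1 / 2) (by positivity) (by norm_num)
  have hpre : sqrt ⁻¹' Iic √(2 * u) = (Ioi (2 * u))ᶜ := by
    ext t
    simp only [mem_preimage, mem_Iic, mem_compl_iff, mem_Ioi, not_lt]
    exact sqrt_le_sqrt_iff (by positivity)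
  rw [chiMeasure, Measure.map_apply continuous_sqrt.measurable measurableSet_Iic, hpre,
    prob_compl_eq_one_sub measurableSet_Ioi, ENNReal.toReal_sub_of_le prob_le_one ENNReal.one_ne_top,
    ENNReal.toReal_one, gammaMeasure_Ioi_toReal (by positivity) (by norm_num) (by positivity)]
  ring_nf

lemma measure_forall_mem_Icc_eq_prod {Ω β : Type*} [MeasurableSpace Ω] [MeasurableSpace β]
    {μ : Measure Ω} {n : ℕ} {Y : ℕ → Ω → β} (hindep : iIndepFun (fun i : Fin n => Y (i + 1)) μ)
    (hY : ∀ i ∈ Finset.Icc 1 n, AEMeasurable (Y i) μ) {A : ℕ → Set β}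
    (hA : ∀ i, MeasurableSet (A i)) :
    μ {ω | ∀ i ∈ Finset.Icc 1 n, Y i ω ∈ A i} = ∏ i ∈ Finset.Icc 1 n, μ.map (Y i) (A i) := by
  have hset : {ω | ∀ i ∈ Finset.Icc 1 n, Y i ω ∈ A i} = ⋂ j : Fin n, Y (j + 1) ⁻¹' A (j + 1) := by
    ext ω
    simp only [Finset.mem_Icc, mem_ofPred_eq, mem_iInter, mem_preimage]
    refine ⟨fun h j => h _ ⟨by omega, j.2⟩, fun h i hi => ?_⟩
    simpa [Nat.sub_add_cancel hi.1] using h ⟨i - 1, by omega⟩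
  rw [hset, hindep.meas_iInter fun j => ⟨A (j + 1), hA _, rfl⟩,
    Fin.prod_univ_eq_prod_range (fun j => μ (Y (j + 1) ⁻¹' A (j + 1))), Finset.range_eq_Ico,
    Finset.prod_Ico_add' (fun i => μ (Y i ⁻¹' A i)), zero_add, Finset.Ico_add_one_right_eq_Icc]
  exact Finset.prod_congr rfl fun i hi => (Measure.map_apply_of_aemeasurable (hY i hi) (hA i)).symm

lemma measure_forall_le_sqrt_toReal_eq_prod {Ω : Type*} [MeasurableSpace Ω] {μ : Measure Ω}
    {n : ℕ} {Y : ℕ → Ω → ℝ} {k : ℕ → ℝ} (hindep : iIndepFun (fun i : Fin n => Y (i + 1)) μ)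
    (hk : ∀ i ∈ Finset.Icc 1 n, 0 < k i)
    (hlaw : ∀ i ∈ Finset.Icc 1 n, μ.map (Y i) = chiMeasure (k i)) {u : ℝ} (hu : 0 ≤ u) :
    (μ {ω | ∀ i ∈ Finset.Icc 1 n, Y i ω ≤ √(2 * u)}).toReal
      = ∏ i ∈ Finset.Icc 1 n, (1 - upperIncGamma (k i / 2) u / Gamma (k i / 2)) := by
  have hY : ∀ i ∈ Finset.Icc 1 n, AEMeasurable (Y i) μ := fun i hi =>
    have := isProbabilityMeasure_chiMeasure (hk i hi)
    .of_map_ne_zero (hlaw i hi ▸ IsProbabilityMeasure.ne_zero _)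
  simp_rw [← mem_Iic]
  rw [measure_forall_mem_Icc_eq_prod hindep hY fun _ => measurableSet_Iic, ENNReal.toReal_prod]
  exact Finset.prod_congr rfl fun i hi => by rw [hlaw i hi, chiMeasure_Iic_sqrt_toReal (hk i hi) hu]

lemma abs_add_log_one_sub_le {x : ℝ} (hx0 : 0 ≤ x) (hx : x ≤ 1 / 2) :
    |x + log (1 - x)| ≤ 2 * x ^ 2 := by
  have h := abs_log_sub_add_sum_range_le (x := x) (by rw [abs_of_nonneg hx0]; linarith) 1
  rw [abs_of_nonneg hx0] at h
  simp only [Finset.range_one, Finset.sum_singleton, zero_add, pow_one, Nat.cast_zero, div_one]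
    at h
  calc |x + log (1 - x)| ≤ x ^ 2 / (1 - x) := h
    _ ≤ x ^ 2 / (1 / 2) := by gcongr; linarith
    _ = 2 * x ^ 2 := by ring

lemma tendsto_prod_one_sub_of_tendsto_sum {α ι : Type*} {F : Filter α} {s : α → Finset ι}
    {p : α → ι → ℝ} {q : α → ℝ} {l : ℝ} (hq : Tendsto q F (𝓝 0))
    (hpq : ∀ᶠ a in F, ∀ i ∈ s a, 0 ≤ p a i ∧ p a i ≤ q a)
    (hsum : Tendsto (fun a => ∑ i ∈ s a, p a i) F (𝓝 l)) :
    Tendsto (fun a => ∏ i ∈ s a, (1 - p a i)) F (𝓝 (exp (-l))) := by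
  have hq2 : ∀ᶠ a in F, q a ≤ 1 / 2 := hq.eventually (eventually_le_nhds (by norm_num))
  have herr : Tendsto (fun a => ∑ i ∈ s a, (p a i + log (1 - p a i))) F (𝓝 0) := by
    have hbound : Tendsto (fun a => 2 * q a * ∑ i ∈ s a, p a i) F (𝓝 0) := by
      simpa using (hq.const_mul 2).mul hsum
    refine squeeze_zero_norm' ?_ hbound
    filter_upwards [hpq, hq2] with a hp hqa
    calc ‖∑ i ∈ s a, (p a i + log (1 - p a i))‖ ≤ ∑ i ∈ s a, 2 * p a i ^ 2 :=
          (norm_sum_le _ _).trans <| Finset.sum_le_sum fun i hi =>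
            abs_add_log_one_sub_le (hp i hi).1 ((hp i hi).2.trans hqa)
      _ ≤ ∑ i ∈ s a, 2 * q a * p a i := Finset.sum_le_sum fun i hi => by
          nlinarith [hp i hi]
      _ = 2 * q a * ∑ i ∈ s a, p a i := by rw [Finset.mul_sum]
  have hlog : Tendsto (fun a => ∑ i ∈ s a, log (1 - p a i)) F (𝓝 (-l)) := by
    simpa [Finset.sum_add_distrib] using herr.sub hsum
  refine ((continuous_exp.tendsto _).comp hlog).congr' ?_
  filter_upwards [hpq, hq2] with a hp hqa
  rw [Function.comp_apply, exp_sum]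
  exact Finset.prod_congr rfl fun i hi => exp_log (by linarith [hp i hi])

lemma tendsto_zero_of_mul_tendsto_zero {α : Type*} {l : Filter α} {f g : α → ℝ}
    (hf : ∀ᶠ a in l, 0 ≤ f a) (hg : Tendsto g l atTop)
    (hfg : Tendsto (fun a => f a * g a) l (𝓝 0)) : Tendsto f l (𝓝 0) := by
  refine squeeze_zero' hf ?_ hfg
  filter_upwards [hf, hg.eventually_ge_atTop 1] with a ha hga
  exact le_mul_of_one_le_right ha hga

lemma tendsto_rpow_div_one_sub_two_mul {α : Type*} {l : Filter α} {u δ : α → ℝ}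
    (hu : ∀ᶠ a in l, 0 < u a) (hδ : Tendsto δ l (𝓝 0))
    (hδlog : Tendsto (fun a => δ a * log (u a)) l (𝓝 0)) :
    Tendsto (fun a => u a ^ δ a / (1 - 2 * δ a)) l (𝓝 1) := by
  have hpow : Tendsto (fun a => u a ^ δ a) l (𝓝 1) := by
    refine Tendsto.congr' ?_ (by simpa using hδlog.rexp)
    filter_upwards [hu] with a ha
    rw [rpow_def_of_pos ha, mul_comm]
  have h := hpow.div ((hδ.const_mul 2).const_sub 1) (by norm_num)
  rwa [mul_zero, sub_zero, div_one] at h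

lemma tendsto_div_add_one_of_tendsto_atTop {α : Type*} {l : Filter α} {u : α → ℝ}
    (hu : Tendsto u l atTop) : Tendsto (fun a => u a / (u a + 1)) l (𝓝 1) := by
  have h : Tendsto (fun a => 1 - (u a + 1)⁻¹) l (𝓝 1) := by
    simpa using (tendsto_inv_atTop_zero.comp (tendsto_atTop_add_const_right _ 1 hu)).const_sub 1
  refine h.congr' ?_
  filter_upwards [hu.eventually_gt_atTop 0] with a ha
  field_simp
  ring

lemma sum_Icc_natCast (n : ℕ) : ∑ i ∈ Finset.Icc 1 n, (i : ℝ) = n * (n + 1) / 2 := by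
  induction n with
  | zero => simp
  | succ m ih =>
    rw [Finset.sum_Icc_succ_top (by omega), ih]
    push_cast
    ring

lemma natCast_mul_div_two_mem_Ioc {β : ℝ} {i n : ℕ} (hβ : 0 < β) (hi : i ∈ Finset.Icc 1 n) :
    (i : ℝ) * β / 2 ∈ Ioc 0 (n * β / 2) := by
  obtain ⟨hi1, hin⟩ := Finset.mem_Icc.1 hi
  have hi1' : (1 : ℝ) ≤ i := by exact_mod_cast hi1
  have hin' : (i : ℝ) ≤ n := by exact_mod_cast hin
  exact ⟨by positivity, by gcongr⟩

lemma sum_Icc_upperIncGamma_div_Gamma_le {β δ u : ℝ} {n : ℕ} (hβ : 0 < β) (hnδ : n * β / 2 ≤ δ)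
    (hδ : δ < 1 / 2) (hu : 1 ≤ u) :
    ∑ i ∈ Finset.Icc 1 n, upperIncGamma (i * β / 2) u / Gamma (i * β / 2)
      ≤ n * (n + 1) * β / 4 * (exp (-u) / u) * (u ^ δ / (1 - 2 * δ)) :=
  calc _ ≤ ∑ i ∈ Finset.Icc 1 n, i * β / 2 * (exp (-u) / u) * (u ^ δ / (1 - 2 * δ)) :=
        Finset.sum_le_sum fun i hi =>
          have hs := natCast_mul_div_two_mem_Ioc hβ hi
          upperIncGamma_div_Gamma_le hs.1 (hs.2.trans hnδ) hδ hu
    _ = _ := by simp only [← Finset.sum_mul, ← Finset.sum_div, sum_Icc_natCast]; ring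

lemma le_sum_Icc_upperIncGamma_div_Gamma {β u : ℝ} {n : ℕ} (hβ : 0 < β) (hnβ : n * β / 2 ≤ 1)
    (hu : 1 ≤ u) :
    n * (n + 1) * β / 4 * (exp (-u) / u) * (u / (u + 1))
      ≤ ∑ i ∈ Finset.Icc 1 n, upperIncGamma (i * β / 2) u / Gamma (i * β / 2) :=
  calc _ = ∑ i ∈ Finset.Icc 1 n, i * β / 2 * (exp (-u) / u) * (u / (u + 1)) := by
        simp only [← Finset.sum_mul, ← Finset.sum_div, sum_Icc_natCast]; ring
    _ ≤ _ := Finset.sum_le_sum fun i hi =>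
          have hs := natCast_mul_div_two_mem_Ioc hβ hi
          le_upperIncGamma_div_Gamma hs.1 (hs.2.trans hnβ) hu

lemma tendsto_sum_Icc_upperIncGamma_div_Gamma {β u : ℕ → ℝ} {l : ℝ} (hβ : ∀ n, 0 < β n)
    (hu : Tendsto u atTop atTop)
    (hlog : Tendsto (fun n : ℕ => n * β n * log (u n)) atTop (𝓝 0))
    (hlim : Tendsto (fun n : ℕ => n ^ 2 * β n * (exp (-u n) / u n)) atTop (𝓝 l)) :
    Tendsto (fun n => ∑ i ∈ Finset.Icc 1 n, upperIncGamma (i * β n / 2) (u n) / Gamma (i * β n / 2))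
      atTop (𝓝 (l / 4)) := by
  have hδlog : Tendsto (fun n => n * β n / 2 * log (u n)) atTop (𝓝 0) := by
    simpa [div_mul_eq_mul_div] using hlog.div_const 2
  have hδ : Tendsto (fun n => n * β n / 2) atTop (𝓝 0) :=
    tendsto_zero_of_mul_tendsto_zero (.of_forall fun n => by have := hβ n; positivity)
      (tendsto_log_atTop.comp hu) hδlog
  have hM : Tendsto (fun n : ℕ => n * (n + 1) * β n / 4 * (exp (-u n) / u n)) atTop
      (𝓝 (l / 4)) := by
    have h : Tendsto (fun n : ℕ => n ^ 2 * β n * (exp (-u n) / u n) * (1 + 1 / n) / 4) atTop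
        (𝓝 (l / 4)) := by
      simpa using (hlim.mul (tendsto_one_div_atTop_nhds_zero_nat.const_add 1)).div_const 4
    refine h.congr' ?_
    filter_upwards [eventually_ge_atTop 1] with n hn
    have : (n : ℝ) ≠ 0 := by positivity
    field_simp
  have hsmall : ∀ᶠ n in atTop, 1 ≤ u n ∧ n * β n / 2 < 1 / 2 :=
    (hu.eventually_ge_atTop 1).and (hδ.eventually (eventually_lt_nhds (by norm_num)))
  refine tendsto_of_tendsto_of_tendsto_of_le_of_le'
    (by simpa using hM.mul (tendsto_div_add_one_of_tendsto_atTop hu))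
    (by simpa using hM.mul (tendsto_rpow_div_one_sub_two_mul (hu.eventually_gt_atTop 0) hδ hδlog))
    ?_ ?_
  · filter_upwards [hsmall] with n ⟨hu1, hδ1⟩
    exact le_sum_Icc_upperIncGamma_div_Gamma (hβ n) (by linarith) hu1
  · filter_upwards [hsmall] with n ⟨hu1, hδ1⟩
    exact sum_Icc_upperIncGamma_div_Gamma_le (hβ n) le_rfl hδ1 hu1

lemma tendsto_prod_one_sub_upperIncGamma_div_Gamma {β u : ℕ → ℝ} {l : ℝ} (hβ : ∀ n, 0 < β n)
    (hu : Tendsto u atTop atTop)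
    (hlog : Tendsto (fun n : ℕ => n * β n * log (u n)) atTop (𝓝 0))
    (hlim : Tendsto (fun n : ℕ => n ^ 2 * β n * (exp (-u n) / u n)) atTop (𝓝 l)) :
    Tendsto (fun n => ∏ i ∈ Finset.Icc 1 n,
      (1 - upperIncGamma (i * β n / 2) (u n) / Gamma (i * β n / 2))) atTop
      (𝓝 (exp (-(l / 4)))) := by
  have hδlog : Tendsto (fun n => n * β n / 2 * log (u n)) atTop (𝓝 0) := by
    simpa [div_mul_eq_mul_div] using hlog.div_const 2
  have hδ : Tendsto (fun n => n * β n / 2) atTop (𝓝 0) :=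
    tendsto_zero_of_mul_tendsto_zero (.of_forall fun n => by have := hβ n; positivity)
      (tendsto_log_atTop.comp hu) hδlog
  -- the termwise upper bound at the largest shape `n * β n / 2` bounds every summand
  refine tendsto_prod_one_sub_of_tendsto_sum (q := fun n => n * β n / 2 * (exp (-u n) / u n) *
      (u n ^ (n * β n / 2) / (1 - 2 * (n * β n / 2)))) ?_ ?_
    (tendsto_sum_Icc_upperIncGamma_div_Gamma hβ hu hlog hlim)
  · simpa using (hδ.mul ((tendsto_exp_neg_atTop_nhds_zero.comp hu).div_atTop hu)).mul
      (tendsto_rpow_div_one_sub_two_mul (hu.eventually_gt_atTop 0) hδ hδlog)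
  · filter_upwards [hu.eventually_ge_atTop 1, hδ.eventually (eventually_lt_nhds one_half_pos)]
      with n hu1 hδ1 i hi
    obtain ⟨hs, hsn⟩ := natCast_mul_div_two_mem_Ioc (hβ n) hi
    refine ⟨(by positivity : (0 : ℝ) ≤ i * β n / 2 * (exp (-u n) / u n) * (u n / (u n + 1))).trans
      (le_upperIncGamma_div_Gamma hs (by linarith) hu1), ?_⟩
    calc _ ≤ i * β n / 2 * (exp (-u n) / u n) * (u n ^ (n * β n / 2) / (1 - 2 * (n * β n / 2))) :=
          upperIncGamma_div_Gamma_le hs hsn hδ1 hu1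
      _ ≤ _ := by
          have : 0 < 1 - 2 * (n * β n / 2) := by linarith
          have : 0 < u n := by linarith
          gcongr

/-- `c ^ 2 / 2` for the threshold `c = x / a + b`, in terms of `y = log (n ^ 2 * β)`,
`a = √(2 y)`, `b = a - log y / a`. -/
noncomputable def gumbelLevel (x y : ℝ) : ℝ := (2 * y + x - log y) ^ 2 / (4 * y)

lemma tendsto_gumbelLevel_div_self (x : ℝ) :
    Tendsto (fun y => gumbelLevel x y / y) atTop (𝓝 1) := by
  have h : Tendsto (fun y : ℝ => (1 + (x / (2 * y) - log y ^ 1 / (2 * y + 0))) ^ 2) atTop (𝓝 1) := by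
    simpa using ((tendsto_const_nhds.div_atTop (tendsto_id.const_mul_atTop two_pos)).sub
      (tendsto_pow_log_div_mul_add_atTop 2 0 1 two_ne_zero)).const_add 1 |>.pow 2
  refine h.congr' ?_
  filter_upwards [eventually_gt_atTop 0] with y hy
  rw [gumbelLevel]
  field_simp
  ring

lemma tendsto_gumbelLevel_atTop (x : ℝ) : Tendsto (gumbelLevel x) atTop atTop := by
  refine ((tendsto_gumbelLevel_div_self x).pos_mul_atTop one_pos tendsto_id).congr' ?_
  filter_upwards [eventually_gt_atTop 0] with y hy
  exact div_mul_cancel₀ _ hy.ne'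

lemma tendsto_sub_gumbelLevel_sub_log (x : ℝ) :
    Tendsto (fun y => y - gumbelLevel x y - log (gumbelLevel x y)) atTop (𝓝 (-x)) := by
  have hsq : Tendsto (fun y : ℝ => x ^ 2 / (4 * y) - 2 * x * (log y ^ 1 / (4 * y + 0))
      + log y ^ 2 / (4 * y + 0)) atTop (𝓝 0) := by
    simpa using ((tendsto_const_nhds.div_atTop (tendsto_id.const_mul_atTop four_pos)).sub
      ((tendsto_pow_log_div_mul_add_atTop 4 0 1 four_ne_zero).const_mul (2 * x))).add
      (tendsto_pow_log_div_mul_add_atTop 4 0 2 four_ne_zero)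
  have hlog := (tendsto_gumbelLevel_div_self x).log one_ne_zero
  rw [log_one] at hlog
  have h := (hsq.add hlog).const_sub (-x)
  rw [add_zero, sub_zero] at h
  refine h.congr' ?_
  filter_upwards [eventually_gt_atTop 0,
    (tendsto_gumbelLevel_atTop x).eventually_gt_atTop 0] with y hy hG
  rw [log_div hG.ne' hy.ne']
  simp only [gumbelLevel] at hG ⊢
  field_simp
  ring

lemma div_sqrt_add_sub_div_sqrt_eq_sqrt_gumbelLevel {x y : ℝ} (hy : 0 < y) (hxy : -x ≤ y) :
    x / √(2 * y) + (√(2 * y) - log y / √(2 * y)) = √(2 * gumbelLevel x y) := by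
  have hr : 0 < √(2 * y) := sqrt_pos.2 (by positivity)
  have hr2 : √(2 * y) ^ 2 = 2 * y := sq_sqrt (by positivity)
  have hnum : 0 ≤ 2 * y + x - log y := by linarith [log_le_sub_one_of_pos hy]
  have h : 2 * gumbelLevel x y = ((2 * y + x - log y) / √(2 * y)) ^ 2 := by
    rw [gumbelLevel, div_pow, hr2]
    field_simp
    ring
  rw [h, sqrt_sq (by positivity)]
  field_simp
  linarith

lemma tendsto_mul_exp_neg_gumbelLevel_log {α : Type*} {l : Filter α} {m : α → ℝ}
    (hm : Tendsto m l atTop) (x : ℝ) :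
    Tendsto (fun a => m a * (exp (-gumbelLevel x (log (m a))) / gumbelLevel x (log (m a)))) l
      (𝓝 (exp (-x))) := by
  have hL := tendsto_log_atTop.comp hm
  refine ((tendsto_sub_gumbelLevel_sub_log x).comp hL).rexp.congr' ?_
  filter_upwards [hm.eventually_gt_atTop 0,
    ((tendsto_gumbelLevel_atTop x).comp hL).eventually_gt_atTop 0] with a hma hG
  simp only [Function.comp_apply] at hG ⊢
  rw [exp_sub, sub_eq_add_neg, exp_add, exp_log hma, exp_log hG, mul_div_assoc]

lemma tendsto_mul_log_gumbelLevel {β : ℕ → ℝ} (hβ : ∀ n, 0 < β n)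
    (hβ1 : Tendsto (fun n : ℕ => (n : ℝ) ^ 2 * β n) atTop atTop)
    (hβ2 : Tendsto (fun n : ℕ => (n : ℝ) * β n * log (log n)) atTop (𝓝 0)) (x : ℝ) :
    Tendsto (fun n : ℕ => n * β n * log (gumbelLevel x (log (n ^ 2 * β n)))) atTop (𝓝 0) := by
  have hL := tendsto_log_atTop.comp hβ1
  have hG := (tendsto_gumbelLevel_atTop x).comp hL
  have hnβ0 : ∀ n : ℕ, 0 ≤ n * β n := fun n => by have := hβ n; positivity
  have hnβ : Tendsto (fun n : ℕ => n * β n) atTop (𝓝 0) :=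
    tendsto_zero_of_mul_tendsto_zero (Eventually.of_forall hnβ0)
      (tendsto_log_atTop.comp (tendsto_log_atTop.comp tendsto_natCast_atTop_atTop)) hβ2
  have hlog_le : ∀ᶠ n : ℕ in atTop,
      log (gumbelLevel x (log (n ^ 2 * β n))) ≤ log 4 + log (log n) := by
    filter_upwards [((tendsto_gumbelLevel_div_self x).comp hL).eventually_le_const one_lt_two,
      hL.eventually_gt_atTop 0, hG.eventually_gt_atTop 0,
      hnβ.eventually_le_const zero_lt_one, eventually_ge_atTop 2] with n hratio hL0 hG0 hnβ1 hn
    simp only [Function.comp_apply] at hratio hL0 hG0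
    have hn2 : (2 : ℝ) ≤ n := by exact_mod_cast hn
    have hlogn : 0 < log n := log_pos (by linarith)
    have hβle : log (β n) ≤ 0 := log_nonpos (hβ n).le (by nlinarith [hβ n])
    have hLle : log (n ^ 2 * β n) ≤ 2 * log n := by
      rw [log_mul (by positivity) (hβ n).ne', log_pow]
      push_cast
      linarith
    rw [div_le_iff₀ hL0] at hratio
    calc log (gumbelLevel x (log (n ^ 2 * β n))) ≤ log (4 * log n) :=
          log_le_log hG0 (by linarith)
      _ = log 4 + log (log n) := log_mul (by norm_num) hlogn.ne'
  have hupper := (hnβ.mul_const (log 4)).add hβ2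
  rw [zero_mul, zero_add] at hupper
  refine tendsto_of_tendsto_of_tendsto_of_le_of_le' tendsto_const_nhds hupper ?_ ?_
  · filter_upwards [hG.eventually_ge_atTop 1] with n hn
    exact mul_nonneg (hnβ0 n) (log_nonneg hn)
  · filter_upwards [hlog_le] with n hn
    nlinarith [hnβ0 n]

theorem max_chi_gumbel_first_regime_general
    {Ω : Type*} [MeasureSpace Ω]
    (β : ℕ → ℝ) (hβpos : ∀ n, 0 < β n)
    (hβ1 : Tendsto (fun n : ℕ => (n : ℝ) ^ 2 * β n) atTop atTop)
    (hβ2 : Tendsto (fun n : ℕ => (n : ℝ) * β n * Real.log (Real.log n)) atTop (nhds 0))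
    (X : ℕ → ℕ → Ω → ℝ)
    (hindep : ∀ n, iIndepFun
      (fun i : Fin n => X n ((i : ℕ) + 1)) ℙ)
    (hlaw : ∀ n, ∀ i ∈ Finset.Icc 1 n,
      (ℙ : Measure Ω).map (X n i) = chiMeasure ((i : ℝ) * β n))
    (a b : ℕ → ℝ)
    (ha : ∀ n : ℕ, a n = Real.sqrt (2 * Real.log ((n : ℝ) ^ 2 * β n)))
    (hb : ∀ n : ℕ, b n = a n - Real.log (Real.log ((n : ℝ) ^ 2 * β n)) / a n)
    (x : ℝ) :
    Tendsto (fun n : ℕ =>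
        (ℙ {ω : Ω | ∀ i ∈ Finset.Icc 1 n, X n i ω ≤ x / a n + b n}).toReal)
      atTop (nhds (Real.exp (-(Real.exp (-x)) / 4))) := by
  set L : ℕ → ℝ := fun n => log ((n : ℝ) ^ 2 * β n)
  have hL : Tendsto L atTop atTop := tendsto_log_atTop.comp hβ1
  have hu := (tendsto_gumbelLevel_atTop x).comp hL
  have hprob : ∀ᶠ n in atTop,
      (ℙ {ω : Ω | ∀ i ∈ Finset.Icc 1 n, X n i ω ≤ x / a n + b n}).toReal
        = ∏ i ∈ Finset.Icc 1 n, (1 - upperIncGamma (i * β n / 2) (gumbelLevel x (L n))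
          / Gamma (i * β n / 2)) := by
    filter_upwards [hL.eventually_gt_atTop 0, hL.eventually_ge_atTop (-x),
      hu.eventually_ge_atTop 0] with n hL0 hLx hu0
    have hc : x / a n + b n = √(2 * gumbelLevel x (L n)) := by
      rw [hb n, ha n]
      exact div_sqrt_add_sub_div_sqrt_eq_sqrt_gumbelLevel hL0 hLx
    rw [hc]
    exact measure_forall_le_sqrt_toReal_eq_prod (hindep n)
      (fun i hi => by linarith [(natCast_mul_div_two_mem_Ioc (hβpos n) hi).1]) (hlaw n) hu0
  rw [neg_div]
  exact (tendsto_prod_one_sub_upperIncGamma_div_Gamma hβpos hu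
    (tendsto_mul_log_gumbelLevel hβpos hβ1 hβ2 x)
    (tendsto_mul_exp_neg_gumbelLevel_log hβ1 x)).congr' (hprob.mono fun n h => h.symm)

/-- **Gumbel fluctuations of the maximal off-diagonal entry, regime
`1/n² ≪ β ≪ 1/(n log log n)`:** if `X_{i,n} ~ χ(iβ_n)` are independent, then
`P(max_{1 ≤ i ≤ n} X_{i,n} ≤ x/a_n + b_n) → exp(−e^{−x}/4)`. -/
theorem max_chi_gumbel_first_regime
    {Ω : Type*} [MeasureSpace Ω] [IsProbabilityMeasure (ℙ : Measure Ω)]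
    (β : ℕ → ℝ) (hβpos : ∀ n, 0 < β n)
    (hβ1 : Tendsto (fun n : ℕ => (n : ℝ) ^ 2 * β n) atTop atTop)
    (hβ2 : Tendsto (fun n : ℕ => (n : ℝ) * β n * Real.log (Real.log n)) atTop (nhds 0))
    (X : ℕ → ℕ → Ω → ℝ)
    (hmeas : ∀ n i, Measurable (X n i))
    (hindep : ∀ n, iIndepFun
      (fun i : Fin n => X n ((i : ℕ) + 1)) ℙ)
    (hlaw : ∀ n, ∀ i ∈ Finset.Icc 1 n,
      (ℙ : Measure Ω).map (X n i) = chiMeasure ((i : ℝ) * β n))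
    (a b : ℕ → ℝ)
    (ha : ∀ n : ℕ, a n = Real.sqrt (2 * Real.log ((n : ℝ) ^ 2 * β n)))
    (hb : ∀ n : ℕ, b n = a n - Real.log (Real.log ((n : ℝ) ^ 2 * β n)) / a n)
    (x : ℝ) (hx : 0 ≤ x) :
    Tendsto (fun n : ℕ =>
        (ℙ {ω : Ω | ∀ i ∈ Finset.Icc 1 n, X n i ω ≤ x / a n + b n}).toReal)
      atTop (nhds (Real.exp (-(Real.exp (-x)) / 4))) :=
  max_chi_gumbel_first_regime_general β hβpos hβ1 hβ2 X hindep hlaw a b ha hb x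
end

section
/- Let 0 < a < 1 and z > 0, and let Γ(a,z) = ∫_z^∞ t^{a−1} e^{−t} dt denote the upper incomplete Gamma function. Then ( z/(z+1−a) ) · e^{−z} z^{a−1} < Γ(a,z) ≤ e^{−z} z^{a−1}. -/
/-!
The upper bound holds because `t ^ (a - 1) ≤ z ^ (a - 1)` on `(z, ∞)` when `a ≤ 1`. For the lower
bound, integration by parts gives `Γ(a, z) = (a - 1) Γ(a - 1, z) + z ^ (a - 1) e^(-z)`, and
`z Γ(a - 1, z) < Γ(a, z)` because `z t ^ (a - 2) < t ^ (a - 1)` for `t > z`; as `1 - a > 0`,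
this yields `z ^ (a - 1) e^(-z) < (1 + (1 - a) / z) Γ(a, z)`.
-/

open Real MeasureTheory Set Filter Topology

theorem setIntegral_lt_setIntegral_of_forall_lt {X : Type*} [MeasurableSpace X] {μ : Measure X}
    {s : Set X} {f g : X → ℝ} (hs : MeasurableSet s) (hμs : μ s ≠ 0)
    (hf : IntegrableOn f s μ) (hg : IntegrableOn g s μ) (hlt : ∀ x ∈ s, f x < g x) :
    ∫ x in s, f x ∂μ < ∫ x in s, g x ∂μ := by
  rw [← sub_pos, ← integral_sub hg hf, setIntegral_pos_iff_support_of_nonneg_ae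
    ((ae_restrict_mem hs).mono fun x hx => (sub_pos.2 (hlt x hx)).le) (hg.sub hf)]
  refine pos_iff_ne_zero.2 (mt (measure_mono_null fun x hx => ⟨?_, hx⟩) hμs)
  exact (sub_pos.2 (hlt x hx)).ne'

noncomputable def upperIncompleteGamma (a z : ℝ) : ℝ :=
  ∫ t in Ioi z, t ^ (a - 1) * exp (-t)

section
variable {z : ℝ}

theorem hasDerivAt_rpow_mul_exp_neg (s : ℝ) {t : ℝ} (ht : 0 < t) :
    HasDerivAt (fun t => t ^ s * exp (-t)) ((s * t ^ (s - 1) - t ^ s) * exp (-t)) t :=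
  ((hasDerivAt_rpow_const (p := s) (Or.inl ht.ne')).mul (hasDerivAt_neg t).exp).congr_deriv
    (by ring)

theorem integrableOn_rpow_mul_exp_neg_Ioi (s : ℝ) (hz : 0 < z) :
    IntegrableOn (fun t => t ^ s * exp (-t)) (Ioi z) := by
  refine integrable_of_isBigO_exp_neg one_half_pos ?_ ?_
  · exact fun t ht =>
      (hasDerivAt_rpow_mul_exp_neg s (hz.trans_le ht)).continuousAt.continuousWithinAt
  · simpa only [mul_comm, neg_div, one_div, neg_mul] using (Gamma_integrand_isLittleO s).isBigO

theorem upperIncompleteGamma_add_one (a : ℝ) (hz : 0 < z) :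
    upperIncompleteGamma (a + 1) z = a * upperIncompleteGamma a z + z ^ a * exp (-z) := by
  have hderiv : ∀ t ∈ Ioi z, HasDerivAt (fun t => -(t ^ a * exp (-t)))
      (t ^ a * exp (-t) - a * (t ^ (a - 1) * exp (-t))) t := fun t ht =>
    (hasDerivAt_rpow_mul_exp_neg a (hz.trans ht)).neg.congr_deriv (by ring)
  have hint₁ := integrableOn_rpow_mul_exp_neg_Ioi a hz
  have hint₂ := (integrableOn_rpow_mul_exp_neg_Ioi (a - 1) hz).const_mul a
  have hFTC := integral_Ioi_of_hasDerivAt_of_tendsto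
    (f := fun t => -(t ^ a * exp (-t)))
    (hasDerivAt_rpow_mul_exp_neg a hz).neg.continuousAt.continuousWithinAt hderiv
    (hint₁.sub hint₂)
    (by simpa using (tendsto_rpow_mul_exp_neg_mul_atTop_nhds_zero a 1 one_pos).neg)
  rw [integral_sub hint₁ hint₂, integral_const_mul] at hFTC
  simp only [upperIncompleteGamma, add_sub_cancel_right]
  linarith

theorem upperIncompleteGamma_le {a : ℝ} (ha : a ≤ 1) (hz : 0 < z) :
    upperIncompleteGamma a z ≤ exp (-z) * z ^ (a - 1) :=
  calc upperIncompleteGamma a z ≤ ∫ t in Ioi z, z ^ (a - 1) * exp (-t) :=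
        setIntegral_mono_on (integrableOn_rpow_mul_exp_neg_Ioi _ hz)
          ((integrableOn_exp_neg_Ioi z).const_mul _) measurableSet_Ioi fun t ht =>
            mul_le_mul_of_nonneg_right (rpow_le_rpow_of_nonpos hz ht.out.le (by linarith))
              (exp_pos _).le
    _ = exp (-z) * z ^ (a - 1) := by rw [integral_const_mul, integral_exp_neg_Ioi, mul_comm]

theorem mul_upperIncompleteGamma_sub_one_lt (a : ℝ) (hz : 0 < z) :
    z * upperIncompleteGamma (a - 1) z < upperIncompleteGamma a z := by
  rw [upperIncompleteGamma, ← integral_const_mul]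
  refine setIntegral_lt_setIntegral_of_forall_lt measurableSet_Ioi (by simp)
    ((integrableOn_rpow_mul_exp_neg_Ioi _ hz).const_mul z) (integrableOn_rpow_mul_exp_neg_Ioi _ hz)
    fun t ht => ?_
  have ht0 : 0 < t := hz.trans ht
  calc z * (t ^ (a - 1 - 1) * exp (-t)) = z / t * (t ^ (a - 1) * exp (-t)) := by
        rw [rpow_sub_one ht0.ne']; ring
    _ < 1 * (t ^ (a - 1) * exp (-t)) := by
        gcongr
        exact (div_lt_one ht0).2 ht
    _ = t ^ (a - 1) * exp (-t) := one_mul _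

end

theorem incomplete_gamma_bounds_general (a z : ℝ) (ha1 : a < 1) (hz : 0 < z) :
    z / (z + 1 - a) * (Real.exp (-z) * z ^ (a - 1))
        < ∫ t in Set.Ioi z, t ^ (a - 1) * Real.exp (-t) ∧
      (∫ t in Set.Ioi z, t ^ (a - 1) * Real.exp (-t)) ≤ Real.exp (-z) * z ^ (a - 1) := by
  refine ⟨?_, upperIncompleteGamma_le ha1.le hz⟩
  have hrec := upperIncompleteGamma_add_one (a - 1) hz
  rw [sub_add_cancel] at hrec
  have hstep := mul_lt_mul_of_pos_left (mul_upperIncompleteGamma_sub_one_lt a hz) (sub_pos.2 ha1)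
  rw [div_mul_eq_mul_div, div_lt_iff₀ (by linarith)]
  change _ < upperIncompleteGamma a z * _
  linear_combination hstep - z * hrec

/-- **Bounds for the upper incomplete Gamma function.**
For `0 < a < 1` and `z > 0`, with `Γ(a,z) = ∫_z^∞ t^(a-1) e^(-t) dt`, we have
`(z/(z+1-a)) · e^(-z) z^(a-1) < Γ(a,z) ≤ e^(-z) z^(a-1)`. -/
theorem incomplete_gamma_bounds (a z : ℝ) (ha0 : 0 < a) (ha1 : a < 1) (hz : 0 < z) :
    z / (z + 1 - a) * (Real.exp (-z) * z ^ (a - 1))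
        < ∫ t in Set.Ioi z, t ^ (a - 1) * Real.exp (-t) ∧
      (∫ t in Set.Ioi z, t ^ (a - 1) * Real.exp (-t)) ≤ Real.exp (-z) * z ^ (a - 1) :=
  incomplete_gamma_bounds_general a z ha1 hz
end

section
/- Let (z_n) be a sequence of reals with z_n → ∞ such that there exists δ > 0 with z_n/(log n)^δ → 0, and let (β_n) be a sequence of positive reals with n² β_n → ∞ and n β_n log log n → 0 as n → ∞. Define Λ_n := n( (z_n²/2)^{β_n/2} − 1 ) (z_n²/2)^{n β_n/2} − (z_n²/2)^{n β_n/2} + 1. Then Λ_n is asymptotically equivalent to (1/2) ( (n β_n/2) log(z_n²/2) )², i.e. the ratio of Λ_n to this quantity converges to 1 as n → ∞. -/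
open Filter Real

set_option maxHeartbeats 1600000 in
/-- **Estimate of `Λ_n` in the regime `1/n² ≪ β ≪ 1/(n log log n)`.**
If `z_n → ∞` with `z_n ≪ (log n)^δ` for some `δ > 0`, and `n²β_n → ∞`,
`n β_n log log n → 0`, then
`Λ_n := n((z_n²/2)^(β_n/2) − 1)(z_n²/2)^(nβ_n/2) − (z_n²/2)^(nβ_n/2) + 1`
is asymptotically equivalent to `(1/2)((nβ_n/2) log(z_n²/2))²`. -/
theorem lambda_estimate_first_regime (z : ℕ → ℝ)
    (hz : Tendsto z atTop atTop)
    (δ : ℝ) (hδ : 0 < δ)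
    (hzδ : Tendsto (fun n : ℕ => z n / Real.log n ^ δ) atTop (nhds 0))
    (β : ℕ → ℝ) (hβpos : ∀ n, 0 < β n)
    (hβ1 : Tendsto (fun n : ℕ => (n : ℝ) ^ 2 * β n) atTop atTop)
    (hβ2 : Tendsto (fun n : ℕ => (n : ℝ) * β n * Real.log (Real.log n)) atTop (nhds 0)) :
    Tendsto (fun n : ℕ =>
        ((n : ℝ) * ((z n ^ 2 / 2) ^ (β n / 2) - 1) * (z n ^ 2 / 2) ^ ((n : ℝ) * β n / 2)
            - (z n ^ 2 / 2) ^ ((n : ℝ) * β n / 2) + 1)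
          / (1 / 2 * ((n : ℝ) * β n / 2 * Real.log (z n ^ 2 / 2)) ^ 2))
      atTop (nhds 1) := by
  set a : ℕ → ℝ := fun n => Real.log (z n ^ 2 / 2) with ha_def
  set x : ℕ → ℝ := fun n => β n / 2 * a n with hx_def
  set y : ℕ → ℝ := fun n => (n : ℝ) * β n / 2 * a n with hy_def
  have hz2 : ∀ᶠ n in atTop, 2 ≤ z n := hz.eventually_ge_atTop 2
  have hn3 : ∀ᶠ n : ℕ in atTop, 3 ≤ n := eventually_ge_atTop 3
  have hlogn : ∀ᶠ n : ℕ in atTop, 1 < Real.log n := by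
    filter_upwards [hn3] with n hn
    have h3 : (3 : ℝ) ≤ n := by exact_mod_cast hn
    have : (1 : ℝ) < Real.log 3 := by
      rw [Real.lt_log_iff_exp_lt (by norm_num)]
      calc Real.exp 1 < 2.7182818286 := Real.exp_one_lt_d9
        _ < 3 := by norm_num
    calc (1 : ℝ) < Real.log 3 := this
      _ ≤ Real.log n := Real.log_le_log (by norm_num) h3
  have hzup : ∀ᶠ n : ℕ in atTop, z n ≤ Real.log n ^ δ := by
    have h1 : ∀ᶠ n : ℕ in atTop, z n / Real.log n ^ δ < 1 :=
      hzδ.eventually (gt_mem_nhds (by norm_num : (0 : ℝ) < 1))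
    filter_upwards [h1, hlogn] with n h1 h2
    have hL : (0 : ℝ) < Real.log n ^ δ :=
      Real.rpow_pos_of_pos (lt_trans one_pos h2) δ
    exact ((div_lt_one hL).mp h1).le
  have hapos : ∀ᶠ n : ℕ in atTop, 0 < a n := by
    filter_upwards [hz2] with n hn
    have : (1 : ℝ) < z n ^ 2 / 2 := by nlinarith
    exact Real.log_pos this
  have haup : ∀ᶠ n : ℕ in atTop, a n ≤ 2 * δ * Real.log (Real.log n) := by
    filter_upwards [hz2, hlogn, hzup] with n h2 hl hup
    have hzpos : (0 : ℝ) < z n := by linarith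
    have h1 : a n ≤ Real.log (z n ^ 2) := by
      apply Real.log_le_log (by positivity)
      nlinarith
    have h2' : Real.log (z n ^ 2) = 2 * Real.log (z n) := by
      rw [Real.log_pow]; norm_num
    have h3 : Real.log (z n) ≤ δ * Real.log (Real.log n) := by
      calc Real.log (z n) ≤ Real.log (Real.log n ^ δ) :=
            Real.log_le_log hzpos hup
        _ = δ * Real.log (Real.log n) := Real.log_rpow (lt_trans one_pos hl) δ
    rw [h2'] at h1
    linarith
  have hy0 : ∀ᶠ n : ℕ in atTop, 0 < y n := by
    filter_upwards [hapos, hn3] with n ha hn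
    have hn' : (0 : ℝ) < n := Nat.cast_pos.mpr (by omega)
    exact mul_pos (div_pos (mul_pos hn' (hβpos n)) two_pos) ha
  have hyle : ∀ᶠ n : ℕ in atTop,
      y n ≤ δ * ((n : ℝ) * β n * Real.log (Real.log n)) := by
    filter_upwards [haup, hn3] with n ha hn
    have hc : (0 : ℝ) ≤ (n : ℝ) * β n / 2 :=
      div_nonneg (mul_nonneg (Nat.cast_nonneg n) (hβpos n).le) (by norm_num)
    calc y n ≤ (n : ℝ) * β n / 2 * (2 * δ * Real.log (Real.log n)) :=
          mul_le_mul_of_nonneg_left ha hc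
      _ = δ * ((n : ℝ) * β n * Real.log (Real.log n)) := by ring
  have hy_t : Tendsto y atTop (nhds 0) :=
    squeeze_zero' (hy0.mono fun n h => h.le) hyle (by simpa using hβ2.const_mul δ)
  have hx0 : ∀ᶠ n : ℕ in atTop, 0 < x n := by
    filter_upwards [hapos] with n ha
    exact mul_pos (half_pos (hβpos n)) ha
  have hxley : ∀ᶠ n : ℕ in atTop, x n ≤ y n := by
    filter_upwards [hapos, hn3] with n ha hn
    have hn' : (1 : ℝ) ≤ n := by exact_mod_cast hn.trans' (by norm_num)
    have : β n / 2 ≤ (n : ℝ) * β n / 2 := by nlinarith [hβpos n]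
    exact mul_le_mul_of_nonneg_right this ha.le
  have hx_t : Tendsto x atTop (nhds 0) :=
    squeeze_zero' (hx0.mono fun n h => h.le) hxley hy_t
  have hyx : ∀ n, y n = (n : ℝ) * x n := by
    intro n; simp only [hx_def, hy_def]; ring
  -- slope limit for exp at 0
  have hslope : Tendsto (fun t : ℝ => (Real.exp t - 1) / t) (nhdsWithin 0 {(0:ℝ)}ᶜ) (nhds 1) := by
    have h := Real.hasDerivAt_exp 0
    rw [hasDerivAt_iff_tendsto_slope] at h
    simp only [Real.exp_zero] at h
    apply h.congr'
    filter_upwards [self_mem_nhdsWithin] with t ht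
    simp [slope_def_field, Real.exp_zero]
  have hxne : Tendsto x atTop (nhdsWithin 0 {(0:ℝ)}ᶜ) :=
    tendsto_nhdsWithin_of_tendsto_nhds_of_eventually_within _ hx_t
      (hx0.mono fun n h => h.ne')
  have hyne : Tendsto y atTop (nhdsWithin 0 {(0:ℝ)}ᶜ) :=
    tendsto_nhdsWithin_of_tendsto_nhds_of_eventually_within _ hy_t
      (hy0.mono fun n h => h.ne')
  have hA : Tendsto (fun n => (Real.exp (x n) - 1) / x n) atTop (nhds 1) := hslope.comp hxne
  have hB : Tendsto (fun n => (Real.exp (y n) - 1) / y n) atTop (nhds 1) := hslope.comp hyne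
  -- second order bounds
  have hy1 : ∀ᶠ n : ℕ in atTop, y n ≤ 1 := hy_t.eventually_le_const one_pos
  have hC : Tendsto (fun n => (Real.exp (y n) - 1 - y n) / (y n ^ 2 / 2)) atTop (nhds 1) := by
    have key : Tendsto (fun n => (Real.exp (y n) - 1 - y n) / (y n ^ 2 / 2) - 1) atTop (nhds 0) := by
      rw [tendsto_zero_iff_abs_tendsto_zero]
      apply squeeze_zero' (Eventually.of_forall fun n => abs_nonneg _)
        (g := fun n => (4 / 9 : ℝ) * y n)
      · filter_upwards [hy0, hy1] with n h0 h1
        have habs : |y n| ≤ 1 := by rw [abs_of_pos h0]; exact h1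
        have hb := Real.exp_bound habs (n := 3) (by norm_num)
        have hsum : ∑ m ∈ Finset.range 3, y n ^ m / m.factorial
            = 1 + y n + y n ^ 2 / 2 := by
          simp [Finset.sum_range_succ, Nat.factorial]
        rw [hsum, abs_of_pos h0] at hb
        have hb' : |Real.exp (y n) - 1 - y n - y n ^ 2 / 2| ≤ 2 / 9 * y n ^ 3 := by
          calc |Real.exp (y n) - 1 - y n - y n ^ 2 / 2|
              = |Real.exp (y n) - (1 + y n + y n ^ 2 / 2)| := by ring_nf
            _ ≤ y n ^ 3 * (Nat.succ 3 / ((3:ℕ).factorial * 3)) := hb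
            _ = 2 / 9 * y n ^ 3 := by norm_num [Nat.factorial]; ring
        have hd : (Real.exp (y n) - 1 - y n) / (y n ^ 2 / 2) - 1
            = (Real.exp (y n) - 1 - y n - y n ^ 2 / 2) / (y n ^ 2 / 2) := by
          field_simp
        rw [hd, abs_div, abs_of_pos (by positivity : (0:ℝ) < y n ^ 2 / 2)]
        rw [div_le_iff₀ (by positivity : (0:ℝ) < y n ^ 2 / 2)]
        calc |Real.exp (y n) - 1 - y n - y n ^ 2 / 2| ≤ 2 / 9 * y n ^ 3 := hb'
          _ = 4 / 9 * y n * (y n ^ 2 / 2) := by ring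
      · simpa using hy_t.const_mul (4 / 9 : ℝ)
    have := key.add (tendsto_const_nhds (x := (1:ℝ)))
    simpa using this
  have hD : Tendsto (fun n : ℕ => (n : ℝ) * (Real.exp (x n) - 1 - x n) / (y n ^ 2 / 2))
      atTop (nhds 0) := by
    rw [tendsto_zero_iff_abs_tendsto_zero]
    apply squeeze_zero' (Eventually.of_forall fun n => abs_nonneg _)
      (g := fun n : ℕ => (3 / 2 : ℝ) / n)
    · filter_upwards [hx0, hy0, hy1, hxley, hn3] with n h0 hy0' h1 hxy hn
      have hnpos : (0 : ℝ) < n := by positivity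
      have habs : |x n| ≤ 1 := by rw [abs_of_pos h0]; linarith
      have hb := Real.exp_bound habs (n := 2) (by norm_num)
      have hsum : ∑ m ∈ Finset.range 2, x n ^ m / m.factorial = 1 + x n := by
        simp [Finset.sum_range_succ, Nat.factorial]
      rw [hsum, abs_of_pos h0] at hb
      have hb' : |Real.exp (x n) - 1 - x n| ≤ 3 / 4 * x n ^ 2 := by
        calc |Real.exp (x n) - 1 - x n| = |Real.exp (x n) - (1 + x n)| := by ring_nf
          _ ≤ x n ^ 2 * (Nat.succ 2 / ((2:ℕ).factorial * 2)) := hb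
          _ = 3 / 4 * x n ^ 2 := by norm_num [Nat.factorial]; ring
      have hysq : y n ^ 2 = (n : ℝ) ^ 2 * x n ^ 2 := by rw [hyx n]; ring
      rw [abs_div, abs_mul, abs_of_pos hnpos, abs_of_pos (by positivity : (0:ℝ) < y n ^ 2 / 2)]
      rw [div_le_div_iff₀ (by positivity : (0:ℝ) < y n ^ 2 / 2) hnpos]
      calc (n : ℝ) * |Real.exp (x n) - 1 - x n| * n ≤ (n:ℝ) * (3 / 4 * x n ^ 2) * n := by
            have := mul_le_mul_of_nonneg_left hb' hnpos.le
            nlinarith [hb', hnpos]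
        _ = 3 / 2 * (y n ^ 2 / 2) := by rw [hysq]; ring
    · simpa using tendsto_const_div_atTop_nhds_zero_nat (3 / 2 : ℝ)
  -- combine
  have hL : Tendsto (fun n : ℕ => 2 * ((Real.exp (x n) - 1) / x n) * ((Real.exp (y n) - 1) / y n)
      + (n : ℝ) * (Real.exp (x n) - 1 - x n) / (y n ^ 2 / 2)
      - (Real.exp (y n) - 1 - y n) / (y n ^ 2 / 2)) atTop (nhds 1) := by
    have := (((hA.const_mul 2).mul hB).add hD).sub hC
    norm_num at this
    exact this
  clear_value a x y
  apply hL.congr'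
  filter_upwards [hz2, hn3, hx0, hy0] with n h2 hn hx' hy'
  have hnpos : (0 : ℝ) < n := by positivity
  have hpos : (0 : ℝ) < z n ^ 2 / 2 := by nlinarith
  have ex : Real.log (z n ^ 2 / 2) * (β n / 2) = x n := by
    simp only [hx_def, ha_def]; ring
  have ey : Real.log (z n ^ 2 / 2) * ((n : ℝ) * β n / 2) = y n := by
    simp only [hy_def, ha_def]; ring
  have ed : (n : ℝ) * β n / 2 * Real.log (z n ^ 2 / 2) = y n := by
    simp only [hy_def, ha_def]
  rw [Real.rpow_def_of_pos hpos, Real.rpow_def_of_pos hpos, ex, ey, ed]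
  have hyx' := hyx n
  rw [hyx'] at hy' ⊢
  have hxne' : x n ≠ 0 := hx'.ne'
  have hnne : (n : ℝ) ≠ 0 := hnpos.ne'
  field_simp
  ring
end

section
/- Let (β_n) be a sequence of positive reals with n² β_n → ∞ and n β_n log log n → 0 as n → ∞, and for x ≥ 0 set φ_n(x) = x/√(2 log(n² β_n)) + √(2 log(n² β_n)) − log log(n² β_n)/√(2 log(n² β_n)). Then for all fixed 0 ≤ y < x < ∞, max_{1 ≤ i ≤ n} | Q( i β_n/2 , φ_n(x)²/2 ) − Q( i β_n/2 , φ_n(y)²/2 ) | → 0 as n → ∞, where Q(a,z) = (1/Γ(a)) ∫_z^∞ t^{a−1} e^{−t} dt. -/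
open Filter Real

/-- The regularized upper incomplete Gamma function
`Q(a,z) = (1/Γ(a)) ∫_z^∞ t^(a-1) e^(-t) dt`. -/
noncomputable def regIncGamma (a z : ℝ) : ℝ :=
  (1 / Real.Gamma a) * ∫ t in Set.Ioi z, t ^ (a - 1) * Real.exp (-t)

lemma one_le_Gamma_of_le_one {a : ℝ} (ha : 0 < a) (ha1 : a ≤ 1) : 1 ≤ Real.Gamma a := by
  rcases eq_or_lt_of_le ha1 with h | h
  · rw [h, Real.Gamma_one]
  · have hc := Real.convexOn_log_Gamma
    have h2a : (0:ℝ) < 2 - a := by linarith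
    have hθ0 : (0:ℝ) ≤ 1 / (2 - a) := by positivity
    have hθ1 : (0:ℝ) ≤ (1 - a) / (2 - a) := by apply div_nonneg <;> linarith
    have hθs : 1 / (2 - a) + (1 - a) / (2 - a) = 1 := by field_simp; ring
    have key := hc.2 (Set.mem_Ioi.2 ha) (Set.mem_Ioi.2 (by norm_num : (0:ℝ) < 2))
      hθ0 hθ1 hθs
    have hcomb : (1 / (2 - a)) • a + ((1 - a) / (2 - a)) • (2:ℝ) = 1 := by
      simp only [smul_eq_mul]
      field_simp
      ring
    rw [hcomb] at key
    simp only [Function.comp_apply, Real.Gamma_one, Real.Gamma_two, Real.log_one,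
      smul_eq_mul, mul_zero, add_zero] at key
    have hlog : 0 ≤ Real.log (Real.Gamma a) := by
      nlinarith [one_div_pos.2 (show (0:ℝ) < 2 - a by linarith)]
    calc (1:ℝ) = Real.exp 0 := (Real.exp_zero).symm
    _ ≤ Real.exp (Real.log (Real.Gamma a)) := Real.exp_le_exp.2 hlog
    _ = Real.Gamma a := Real.exp_log (Real.Gamma_pos_of_pos ha)

lemma regIncGamma_nonneg {a z : ℝ} (ha : 0 < a) (hz : 0 ≤ z) : 0 ≤ regIncGamma a z := by
  apply mul_nonneg
  · have := Real.Gamma_pos_of_pos ha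
    positivity
  · apply MeasureTheory.setIntegral_nonneg measurableSet_Ioi
    intro t ht
    have ht0 : 0 ≤ t := le_of_lt (lt_of_le_of_lt hz ht)
    positivity

lemma regIncGamma_le_exp {a z : ℝ} (ha : 0 < a) (ha1 : a ≤ 1) (hz : 1 ≤ z) :
    regIncGamma a z ≤ Real.exp (-z) := by
  have hΓ : 1 ≤ Real.Gamma a := one_le_Gamma_of_le_one ha ha1
  have hΓ0 : 0 < Real.Gamma a := Real.Gamma_pos_of_pos ha
  have hint : MeasureTheory.IntegrableOn (fun t : ℝ => t ^ (a - 1) * Real.exp (-t))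
      (Set.Ioi z) := by
    have h1 : MeasureTheory.IntegrableOn (fun t : ℝ => Real.exp (-t) * t ^ (a - 1))
        (Set.Ioi z) :=
      (Real.GammaIntegral_convergent ha).mono_set
        (Set.Ioi_subset_Ioi (by linarith : (0:ℝ) ≤ z))
    exact h1.congr_fun (fun t _ => mul_comm _ _) measurableSet_Ioi
  have hexp : MeasureTheory.IntegrableOn (fun t : ℝ => Real.exp (-t)) (Set.Ioi z) := by
    have := exp_neg_integrableOn_Ioi z (b := 1) one_pos
    simpa using this
  have hIle : (∫ t in Set.Ioi z, t ^ (a - 1) * Real.exp (-t)) ≤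
      ∫ t in Set.Ioi z, Real.exp (-t) := by
    apply MeasureTheory.setIntegral_mono_on hint hexp measurableSet_Ioi
    intro t ht
    have ht1 : 1 ≤ t := le_of_lt (lt_of_le_of_lt hz ht)
    have hpow : t ^ (a - 1) ≤ 1 :=
      Real.rpow_le_one_of_one_le_of_nonpos ht1 (by linarith)
    calc t ^ (a - 1) * Real.exp (-t) ≤ 1 * Real.exp (-t) := by
          apply mul_le_mul_of_nonneg_right hpow (Real.exp_nonneg _)
    _ = Real.exp (-t) := one_mul _
  have hInonneg : 0 ≤ ∫ t in Set.Ioi z, t ^ (a - 1) * Real.exp (-t) := by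
    apply MeasureTheory.setIntegral_nonneg measurableSet_Ioi
    intro t ht
    have ht0 : (0:ℝ) ≤ t := by have := Set.mem_Ioi.1 ht; linarith
    positivity
  calc regIncGamma a z ≤ 1 * ∫ t in Set.Ioi z, t ^ (a - 1) * Real.exp (-t) := by
        apply mul_le_mul_of_nonneg_right _ hInonneg
        rw [div_le_one hΓ0]
        exact hΓ
  _ = ∫ t in Set.Ioi z, t ^ (a - 1) * Real.exp (-t) := one_mul _
  _ ≤ ∫ t in Set.Ioi z, Real.exp (-t) := hIle
  _ = Real.exp (-z) := integral_exp_neg_Ioi z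

/-- **Uniform negligibility in the regime `1/n² ≪ β ≪ 1/(n log log n)`:**
`max_{1 ≤ i ≤ n} |Q(iβ_n/2, φ_n(x)²/2) − Q(iβ_n/2, φ_n(y)²/2)| → 0`. -/
theorem uniform_negligibility_first_regime (β : ℕ → ℝ) (hβpos : ∀ n, 0 < β n)
    (hβ1 : Tendsto (fun n : ℕ => (n : ℝ) ^ 2 * β n) atTop atTop)
    (hβ2 : Tendsto (fun n : ℕ => (n : ℝ) * β n * Real.log (Real.log n)) atTop (nhds 0))
    (φ : ℕ → ℝ → ℝ)
    (hφ : ∀ n : ℕ, ∀ x : ℝ, 0 ≤ x →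
      φ n x = x / Real.sqrt (2 * Real.log ((n : ℝ) ^ 2 * β n))
        + Real.sqrt (2 * Real.log ((n : ℝ) ^ 2 * β n))
        - Real.log (Real.log ((n : ℝ) ^ 2 * β n))
            / Real.sqrt (2 * Real.log ((n : ℝ) ^ 2 * β n)))
    (x y : ℝ) (hy : 0 ≤ y) (hxy : y < x) :
    Tendsto (fun n : ℕ =>
        ⨆ i ∈ Finset.Icc 1 n,
          |regIncGamma ((i : ℝ) * β n / 2) (φ n x ^ 2 / 2)
            - regIncGamma ((i : ℝ) * β n / 2) (φ n y ^ 2 / 2)|)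
      atTop (nhds 0) := by
  have hx : 0 ≤ x := le_of_lt (lt_of_le_of_lt hy hxy)
  set L : ℕ → ℝ := fun n => Real.log ((n : ℝ) ^ 2 * β n) with hLdef
  have hL : Tendsto L atTop atTop := Real.tendsto_log_atTop.comp hβ1
  -- n β n → 0
  have hnβ : Tendsto (fun n : ℕ => (n : ℝ) * β n) atTop (nhds 0) := by
    apply tendsto_of_tendsto_of_tendsto_of_le_of_le' tendsto_const_nhds hβ2
    · filter_upwards with n
      exact mul_nonneg (Nat.cast_nonneg n) (hβpos n).le
    · filter_upwards [eventually_ge_atTop 21] with n hn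
      have hn21 : (21 : ℝ) ≤ (n : ℝ) := by exact_mod_cast hn
      have he : Real.exp 1 < 2.7182818286 := Real.exp_one_lt_d9
      have h3 : Real.exp 3 < 21 := by
        have h1 : Real.exp 3 = (Real.exp 1) ^ 3 := by
          rw [← Real.exp_nat_mul]; norm_num
        have h2 : (Real.exp 1) ^ 3 ≤ 2.7182818286 ^ 3 :=
          pow_le_pow_left₀ (Real.exp_pos 1).le he.le 3
        rw [h1]
        calc (Real.exp 1) ^ 3 ≤ 2.7182818286 ^ 3 := h2
        _ < 21 := by norm_num
      have hlogn : 3 ≤ Real.log n := by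
        rw [Real.le_log_iff_exp_le (by linarith)]
        linarith
      have hloglog : 1 ≤ Real.log (Real.log n) := by
        rw [Real.le_log_iff_exp_le (by linarith)]
        calc Real.exp 1 ≤ 3 := by linarith
        _ ≤ Real.log n := hlogn
      have hnb : 0 ≤ (n : ℝ) * β n := mul_nonneg (Nat.cast_nonneg n) (hβpos n).le
      nlinarith
  have hsmall : ∀ᶠ n : ℕ in atTop, (n : ℝ) * β n ≤ 2 := by
    filter_upwards [hnβ.eventually_lt_const (by norm_num : (0:ℝ) < 2)] with n hn
    exact hn.le
  -- key eventual bound on φ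
  have hφbound : ∀ᶠ n : ℕ in atTop,
      L n / 4 ≤ φ n x ^ 2 / 2 ∧ L n / 4 ≤ φ n y ^ 2 / 2 ∧ 1 ≤ φ n x ^ 2 / 2 ∧
        1 ≤ φ n y ^ 2 / 2 := by
    filter_upwards [hL.eventually_ge_atTop 4] with n hn4
    set t := Real.sqrt (L n / 2) with htdef
    have hL0 : (0:ℝ) < L n := by linarith
    have ht2 : t ^ 2 = L n / 2 := Real.sq_sqrt (by linarith)
    have ht0 : 0 < t := Real.sqrt_pos.2 (by linarith)
    have ht2' : 2 ≤ t ^ 2 := by rw [ht2]; linarith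
    have hs : Real.sqrt (2 * L n) = 2 * t := by
      rw [htdef, show 2 * L n = 2 ^ 2 * (L n / 2) by ring,
        Real.sqrt_mul (by positivity), Real.sqrt_sq (by norm_num)]
    have hlogL : Real.log (L n) ≤ L n :=
      (Real.log_le_sub_one_of_pos hL0).trans (by linarith)
    have key : ∀ z : ℝ, 0 ≤ z → t ≤ φ n z := by
      intro z hz
      rw [hφ n z hz, hs]
      have h1 : 0 ≤ z / (2 * t) := by positivity
      have h2 : Real.log (L n) / (2 * t) ≤ t := by
        rw [div_le_iff₀ (by positivity)]
        calc Real.log (L n) ≤ L n := hlogL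
        _ = t * (2 * t) := by nlinarith
      linarith
    have hφx := key x hx
    have hφy := key y hy
    have hxsq : t ^ 2 ≤ φ n x ^ 2 := by nlinarith
    have hysq : t ^ 2 ≤ φ n y ^ 2 := by nlinarith
    exact ⟨by linarith, by linarith, by linarith, by linarith⟩
  -- squeeze
  apply tendsto_of_tendsto_of_tendsto_of_le_of_le' tendsto_const_nhds
    (show Tendsto (fun n : ℕ => 2 * Real.exp (-(L n / 4))) atTop (nhds 0) by
      have : Tendsto (fun n : ℕ => Real.exp (-(L n / 4))) atTop (nhds 0) :=
        Real.tendsto_exp_atBot.comp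
          (tendsto_neg_atBot_iff.2 (hL.atTop_div_const (by norm_num)))
      simpa using this.const_mul 2)
  · filter_upwards with n
    exact Real.iSup_nonneg fun i => Real.iSup_nonneg fun _ => abs_nonneg _
  · filter_upwards [hsmall, hφbound] with n hn2 hφb
    have h0 : 0 ≤ 2 * Real.exp (-(L n / 4)) := by positivity
    apply Real.iSup_le _ h0
    intro i
    apply Real.iSup_le _ h0
    intro hi
    obtain ⟨hi1, hin⟩ := Finset.mem_Icc.1 hi
    have ha0 : 0 < (i : ℝ) * β n / 2 := by
      have : (1:ℝ) ≤ (i : ℝ) := by exact_mod_cast hi1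
      have := hβpos n
      positivity
    have ha1 : (i : ℝ) * β n / 2 ≤ 1 := by
      have hiN : (i : ℝ) ≤ (n : ℝ) := by exact_mod_cast hin
      have := (hβpos n).le
      nlinarith
    obtain ⟨hbx, hby, hx1, hy1⟩ := hφb
    have hQx0 := regIncGamma_nonneg ha0 (show (0:ℝ) ≤ φ n x ^ 2 / 2 by linarith)
    have hQy0 := regIncGamma_nonneg ha0 (show (0:ℝ) ≤ φ n y ^ 2 / 2 by linarith)
    have hQx := regIncGamma_le_exp ha0 ha1 hx1
    have hQy := regIncGamma_le_exp ha0 ha1 hy1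
    have hex : Real.exp (-(φ n x ^ 2 / 2)) ≤ Real.exp (-(L n / 4)) :=
      Real.exp_le_exp.2 (by linarith)
    have hey : Real.exp (-(φ n y ^ 2 / 2)) ≤ Real.exp (-(L n / 4)) :=
      Real.exp_le_exp.2 (by linarith)
    calc |regIncGamma ((i : ℝ) * β n / 2) (φ n x ^ 2 / 2)
        - regIncGamma ((i : ℝ) * β n / 2) (φ n y ^ 2 / 2)|
        ≤ |regIncGamma ((i : ℝ) * β n / 2) (φ n x ^ 2 / 2)|
          + |regIncGamma ((i : ℝ) * β n / 2) (φ n y ^ 2 / 2)| := abs_sub _ _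
    _ = regIncGamma ((i : ℝ) * β n / 2) (φ n x ^ 2 / 2)
          + regIncGamma ((i : ℝ) * β n / 2) (φ n y ^ 2 / 2) := by
        rw [abs_of_nonneg hQx0, abs_of_nonneg hQy0]
    _ ≤ Real.exp (-(φ n x ^ 2 / 2)) + Real.exp (-(φ n y ^ 2 / 2)) :=
        add_le_add hQx hQy
    _ ≤ 2 * Real.exp (-(L n / 4)) := by linarith
end

section
/- Let γ ∈ (0,1), μ_n = (log log n)^{−1/2}, and for a fixed x ≥ 0 set a_n = √(2 log(n/(γ log log n))) and z_n = x/a_n + a_n + [ (γ/2 − 1) log log(n/(γ log log n)) − log(2^{−γ/2} Γ(γ)) ] / a_n. Then S¹_n := e^{−z_n²/2} Σ_{i=1}^{⌊n(1−μ_n)⌋} z_n^{γ i/n − 2} / ( 2^{γ i/(2n) − 1} Γ(γ i/n) ) → 0 as n → ∞. -/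
/-! For `i ≤ n(1 - μ_n)` the exponent `s = γi/n` lies in `(0, γ(1 - μ_n)]`, where `Γ(s) ≥ 1` and
`2^{s/2-1} ≥ 1/2`; as `z_n ≥ 1`, the whole sum is at most `2n z_n^{γ(1-μ_n)-2}`.
Write `M_n = a_n²/2 = log(n/(γ log log n))`, `K = log(2^{-γ/2} Γ(γ))` and
`c_n = (γ/2 - 1) log M_n - K`. Then `z_n² ≥ 2M_n + 2c_n ≥ M_n`, and since
`e^{-M_n} = γ log log n / n` the bound collapses to `2γ e^K (log log n) M_n^{-γμ_n/2}`.
Finally `log M_n ≥ log log n - 1` and `μ_n log log n = √(log log n)`, so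
`M_n^{-γμ_n/2} = O(e^{-(γ/2)√(log log n)})`, which beats the factor `log log n`. -/

open Filter Real Finset Topology

lemma one_le_Gamma_of_le_one_s15 {s : ℝ} (hs : 0 < s) (hs1 : s ≤ 1) : 1 ≤ Gamma s := by
  simpa [Gamma_one] using Gamma_strictAntiOn_Ioc.antitoneOn ⟨hs, hs1⟩ ⟨one_pos, le_rfl⟩ hs1

lemma rpow_div_two_rpow_mul_Gamma_le {z s t : ℝ} (hz : 1 ≤ z) (hs : 0 < s) (hst : s ≤ t)
    (ht : t ≤ 1) : z ^ (s - 2) / (2 ^ (s / 2 - 1) * Gamma s) ≤ 2 * z ^ (t - 2) := by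
  have h2 : (2 : ℝ)⁻¹ ≤ 2 ^ (s / 2 - 1) := by
    rw [← rpow_neg_one]
    exact rpow_le_rpow_of_exponent_le one_le_two (by linarith)
  have hden : (2 : ℝ)⁻¹ ≤ 2 ^ (s / 2 - 1) * Gamma s := by
    nlinarith [one_le_Gamma_of_le_one_s15 hs (hst.trans ht)]
  calc z ^ (s - 2) / (2 ^ (s / 2 - 1) * Gamma s) ≤ z ^ (t - 2) / 2⁻¹ :=
        div_le_div₀ (by positivity) (rpow_le_rpow_of_exponent_le hz (by linarith)) (by norm_num)
          hden
    _ = 2 * z ^ (t - 2) := by ring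

lemma sum_Icc_floor_rpow_div_Gamma_le {γ μ z : ℝ} (hγ0 : 0 < γ) (hγ1 : γ ≤ 1) (hμ0 : 0 ≤ μ)
    (hμ1 : μ ≤ 1) (hz : 1 ≤ z) (n : ℕ) :
    ∑ i ∈ Icc 1 ⌊(n : ℝ) * (1 - μ)⌋₊,
        z ^ (γ * (i : ℝ) / n - 2)
          / ((2 : ℝ) ^ (γ * (i : ℝ) / (2 * n) - 1) * Gamma (γ * (i : ℝ) / n))
      ≤ n * (2 * z ^ (γ * (1 - μ) - 2)) := by
  set m := ⌊(n : ℝ) * (1 - μ)⌋₊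
  have hm : (m : ℝ) ≤ n * (1 - μ) := Nat.floor_le (by nlinarith [n.cast_nonneg (α := ℝ)])
  calc _ ≤ ∑ _i ∈ Icc 1 m, 2 * z ^ (γ * (1 - μ) - 2) := by
        refine sum_le_sum fun i hi => ?_
        have hi1 : (1 : ℝ) ≤ i := by exact_mod_cast (mem_Icc.1 hi).1
        have him : (i : ℝ) ≤ n * (1 - μ) := (Nat.cast_le.2 (mem_Icc.1 hi).2).trans hm
        have hn : (0 : ℝ) < n := by nlinarith
        rw [show γ * (i : ℝ) / (2 * n) = γ * i / n / 2 by ring]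
        refine rpow_div_two_rpow_mul_Gamma_le hz (by positivity) ?_ (by nlinarith)
        rw [div_le_iff₀ hn]
        nlinarith
    _ = m * (2 * z ^ (γ * (1 - μ) - 2)) := by simp
    _ ≤ n * (2 * z ^ (γ * (1 - μ) - 2)) := by
        refine mul_le_mul_of_nonneg_right (hm.trans ?_) (by positivity)
        nlinarith [n.cast_nonneg (α := ℝ)]

lemma two_mul_add_le_sq_sqrt_add_div {M : ℝ} (hM : 0 < M) (w : ℝ) :
    2 * (M + w) ≤ (√(2 * M) + w / √(2 * M)) ^ 2 := by
  have ha : √(2 * M) ≠ 0 := by positivity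
  nlinarith [sq_nonneg (w / √(2 * M)), mul_div_cancel₀ w ha, sq_sqrt (by positivity : 0 ≤ 2 * M)]

lemma sqrt_add_div_pos {M w : ℝ} (hM : 0 < M) (hw : -(2 * M) < w) :
    0 < √(2 * M) + w / √(2 * M) := by
  have ha : 0 < √(2 * M) := by positivity
  rw [show √(2 * M) + w / √(2 * M) = (√(2 * M) ^ 2 + w) / √(2 * M) by field_simp,
    sq_sqrt (by positivity)]
  exact div_pos (by linarith) ha

lemma exp_neg_mul_rpow_eq {γ μ K L M N : ℝ} (hγ : 0 < γ) (hL : 0 < L) (hN : 0 < N) (hM : 0 < M)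
    (hMN : M = log (N / (γ * L))) :
    exp (-(M + ((γ / 2 - 1) * log M - K))) * (N * (2 * M ^ ((γ * (1 - μ) - 2) / 2)))
      = 2 * γ * exp K * L * M ^ (-(γ * μ / 2)) := by
  have hexpM : exp (-M) * N = γ * L := by
    rw [exp_neg, hMN, exp_log (by positivity)]
    field_simp
  have hexpc : exp (-((γ / 2 - 1) * log M - K)) * M ^ ((γ * (1 - μ) - 2) / 2)
      = exp K * M ^ (-(γ * μ / 2)) := by
    rw [rpow_def_of_pos hM, rpow_def_of_pos hM, ← exp_add, ← exp_add]
    ring_nf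
  calc _ = 2 * (exp (-M) * N)
        * (exp (-((γ / 2 - 1) * log M - K)) * M ^ ((γ * (1 - μ) - 2) / 2)) := by
        rw [neg_add, exp_add]; ring
    _ = _ := by rw [hexpM, hexpc]; ring

lemma rpow_neg_mul_le_exp {γ μ L M : ℝ} (hγ : 0 ≤ γ) (hL : 0 < L) (hμ : μ = L ^ (-(1 / 2) : ℝ))
    (hμ1 : μ ≤ 1) (hM : 0 < M) (hLM : L - 1 ≤ log M) :
    M ^ (-(γ * μ / 2)) ≤ exp (γ / 2) * exp (-(γ / 2) * √L) := by
  have hμL : μ * L = √L := by rw [hμ, sqrt_eq_rpow, ← rpow_add_one hL.ne']; norm_num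
  have hμ0 : 0 ≤ μ := hμ ▸ rpow_nonneg hL.le _
  rw [rpow_def_of_pos hM, ← exp_add, exp_le_exp]
  nlinarith [mul_le_mul_of_nonneg_left hLM (by positivity : 0 ≤ γ * μ / 2)]

lemma tendsto_mul_exp_neg_mul_sqrt {b : ℝ} (hb : 0 < b) :
    Tendsto (fun t => t * exp (-b * √t)) atTop (𝓝 0) := by
  refine ((tendsto_rpow_mul_exp_neg_mul_atTop_nhds_zero 2 b hb).comp tendsto_sqrt_atTop).congr' ?_
  filter_upwards [eventually_ge_atTop 0] with t ht
  simp [sq_sqrt ht]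

lemma eventually_mul_log_add_le (b c : ℝ) : ∀ᶠ y in atTop, b * log y + c ≤ y := by
  have hε : 0 < 1 / (2 * (|b| + 1)) := by positivity
  filter_upwards [isLittleO_log_id_atTop.bound hε, eventually_ge_atTop (2 * c),
    eventually_ge_atTop 0] with y hlog hyc hy
  rw [norm_eq_abs, norm_eq_abs, id, abs_of_nonneg hy] at hlog
  have hb : b * log y ≤ (|b| + 1) * |log y| := by
    nlinarith [le_abs_self (b * log y), abs_mul b (log y), abs_nonneg (log y)]
  have hlog' : (|b| + 1) * |log y| ≤ y / 2 := by
    calc (|b| + 1) * |log y| ≤ (|b| + 1) * (1 / (2 * (|b| + 1)) * y) := by gcongr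
      _ = y / 2 := by field_simp
  linarith

lemma sub_one_le_log_of_half_le {y M : ℝ} (hy : 0 < y) (h : y / 2 ≤ M) : log y - 1 ≤ log M := by
  have := log_le_log (by positivity) h
  rw [log_div hy.ne' two_ne_zero] at this
  linarith [log_two_lt_d9]

lemma eventually_log_div_two_le_log_div {γ : ℝ} (hγ0 : 0 < γ) (hγ1 : γ ≤ 1) :
    ∀ᶠ t : ℝ in atTop, log t / 2 ≤ log (t / (γ * log (log t))) := by
  filter_upwards [tendsto_log_atTop.eventually (isLittleO_log_id_atTop.bound one_half_pos),
    tendsto_log_atTop.eventually (tendsto_log_atTop.eventually_gt_atTop 0),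
    eventually_ge_atTop 1] with t hLt hL ht
  have hlogt : 0 ≤ log t := log_nonneg ht
  rw [norm_eq_abs, norm_eq_abs, id, abs_of_pos hL, abs_of_nonneg hlogt] at hLt
  rw [log_div (by positivity) (by positivity)]
  have := log_le_self (by positivity : 0 ≤ γ * log (log t))
  nlinarith

lemma low_index_sum_norm_le {γ μ x K L M z : ℝ} {n : ℕ} (hγ0 : 0 < γ) (hγ1 : γ ≤ 1)
    (hμ0 : 0 ≤ μ) (hμ1 : μ ≤ 1) (hx : 0 ≤ x) (hL : 0 < L) (hM : M = log (n / (γ * L)))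
    (hM1 : 1 ≤ M) (hMK : (2 - γ) * log M + 2 * K ≤ M)
    (hz : z = x / √(2 * M) + √(2 * M) + ((γ / 2 - 1) * log M - K) / √(2 * M)) :
    ‖exp (-(z ^ 2) / 2) * ∑ i ∈ Icc 1 ⌊(n : ℝ) * (1 - μ)⌋₊,
        z ^ (γ * (i : ℝ) / n - 2)
          / ((2 : ℝ) ^ (γ * (i : ℝ) / (2 * n) - 1) * Gamma (γ * (i : ℝ) / n))‖
      ≤ 2 * γ * exp K * L * M ^ (-(γ * μ / 2)) := by
  set c := (γ / 2 - 1) * log M - K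
  have hM0 : 0 < M := by linarith
  have hMc : 0 ≤ M + 2 * c := by simp only [c]; linarith
  have hn : 0 < (n : ℝ) := by
    rcases Nat.eq_zero_or_pos n with rfl | hn
    · simp at hM; linarith -- `log 0 = 0`
    · exact_mod_cast hn
  have hz' : z = √(2 * M) + (x + c) / √(2 * M) := by rw [hz]; ring
  have hzsq : 2 * (M + (x + c)) ≤ z ^ 2 := hz' ▸ two_mul_add_le_sq_sqrt_add_div hM0 _
  have hz0 : 0 < z := hz' ▸ sqrt_add_div_pos hM0 (by linarith)
  have hz1 : 1 ≤ z := by nlinarith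
  set p := γ * (1 - μ) - 2
  have hzp : z ^ p ≤ M ^ (p / 2) := by
    calc z ^ p = (z ^ 2) ^ (p / 2) := by
          rw [← rpow_natCast, ← rpow_mul hz0.le]; ring_nf
      _ ≤ M ^ (p / 2) := rpow_le_rpow_of_nonpos hM0 (by linarith) (by nlinarith)
  rw [norm_of_nonneg (by positivity)]
  calc _ ≤ exp (-(M + (x + c))) * (n * (2 * z ^ p)) :=
        mul_le_mul (exp_le_exp.2 (by linarith))
          (sum_Icc_floor_rpow_div_Gamma_le hγ0 hγ1 hμ0 hμ1 hz1 n) (by positivity) (exp_nonneg _)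
    _ ≤ exp (-(M + c)) * (n * (2 * M ^ (p / 2))) := by gcongr; linarith
    _ = 2 * γ * exp K * L * M ^ (-(γ * μ / 2)) := exp_neg_mul_rpow_eq hγ0 hL hn hM0 hM

/-- **Negligibility of the low-index part of the sum in the regime `nβ = 2γ`:**
with `μ_n = (log log n)^(-1/2)` and `z_n = φ_n(x)`, the partial sum
`S¹_n = e^{-z_n²/2} Σ_{i=1}^{⌊n(1-μ_n)⌋} z_n^{γi/n-2} / (2^{γi/(2n)-1} Γ(γi/n))`
tends to `0`. -/
theorem low_index_sum_negligible (γ : ℝ) (hγ : γ ∈ Set.Ioo (0 : ℝ) 1)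
    (μ : ℕ → ℝ)
    (hμ : ∀ n : ℕ, μ n = Real.log (Real.log n) ^ (-(1 / 2) : ℝ))
    (x : ℝ) (hx : 0 ≤ x)
    (a : ℕ → ℝ)
    (ha : ∀ n : ℕ, a n = Real.sqrt (2 * Real.log ((n : ℝ) / (γ * Real.log (Real.log n)))))
    (z : ℕ → ℝ)
    (hz : ∀ n : ℕ, z n = x / a n + a n
        + ((γ / 2 - 1) * Real.log (Real.log ((n : ℝ) / (γ * Real.log (Real.log n))))
            - Real.log ((2 : ℝ) ^ (-(γ / 2)) * Real.Gamma γ)) / a n) :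
    Tendsto (fun n : ℕ =>
        Real.exp (-(z n ^ 2) / 2) *
          ∑ i ∈ Finset.Icc 1 ⌊(n : ℝ) * (1 - μ n)⌋₊,
            z n ^ (γ * (i : ℝ) / n - 2)
              / ((2 : ℝ) ^ (γ * (i : ℝ) / (2 * n) - 1) * Real.Gamma (γ * (i : ℝ) / n)))
      atTop (nhds 0) := by
  obtain ⟨hγ0, hγ1⟩ := hγ
  set K := log ((2 : ℝ) ^ (-(γ / 2)) * Gamma γ)
  set L : ℕ → ℝ := fun n => log (log n)
  set M : ℕ → ℝ := fun n => log (n / (γ * L n))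
  have hlog : Tendsto (fun n : ℕ => log (n : ℝ)) atTop atTop :=
    tendsto_log_atTop.comp tendsto_natCast_atTop_atTop
  have hL : Tendsto L atTop atTop := tendsto_log_atTop.comp hlog
  have hlogM : ∀ᶠ n : ℕ in atTop, log n / 2 ≤ M n :=
    tendsto_natCast_atTop_atTop.eventually (eventually_log_div_two_le_log_div hγ0 hγ1.le)
  have hM : Tendsto M atTop atTop := tendsto_atTop_mono' _ hlogM (hlog.atTop_div_const two_pos)
  have hB := ((tendsto_mul_exp_neg_mul_sqrt (half_pos hγ0)).comp hL).const_mul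
    (2 * γ * exp K * exp (γ / 2))
  rw [mul_zero] at hB
  refine squeeze_zero_norm' ?_ hB
  filter_upwards [hlog.eventually_gt_atTop 0, hlogM, hL.eventually_ge_atTop 1,
    hM.eventually_ge_atTop 1, hM.eventually (eventually_mul_log_add_le (2 - γ) (2 * K))]
    with n hlog_pos hlogM hL1 hM1 hMK
  have hμ1 : μ n ≤ 1 := hμ n ▸ rpow_le_one_of_one_le_of_nonpos hL1 (by norm_num)
  calc _ ≤ 2 * γ * exp K * L n * M n ^ (-(γ * μ n / 2)) :=
        low_index_sum_norm_le hγ0 hγ1.le (hμ n ▸ by positivity) hμ1 hx (by linarith) rfl hM1 hMK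
          (by rw [hz n, ha n])
    _ ≤ 2 * γ * exp K * L n * (exp (γ / 2) * exp (-(γ / 2) * √(L n))) := by
        gcongr
        exact rpow_neg_mul_le_exp hγ0.le (by linarith) (hμ n) hμ1 (by linarith)
          (sub_one_le_log_of_half_le hlog_pos hlogM)
    _ = _ := by simp only [Function.comp]; ring
end
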